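/- arXiv:2506.03475 — 3 statements merged into one kernel-verified Lean document; each statement's English description precedes it below -/
import Mathlib

section
/- For all τ in the upper half-plane, g₃'(τ) = (−i/(6π))·(g₂(τ)² − 18η₁(τ)g₃(τ)). -/
open Complex Filter Asymptotics Set

noncomputable section

/-- q = e^{2πiτ} -/
def qq (τ : ℂ) : ℂ := Complex.exp (2 * (Real.pi : ℂ) * Complex.I * τ)

/-- divisor power sum σ_k(n) as a complex number -/
def sigmaC (k n : ℕ) : ℂ := ∑ d ∈ n.divisors, (d : ℂ) ^ k

/-- normalized Eisenstein series E₂ -/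
def E2 (τ : ℂ) : ℂ := 1 - 24 * ∑' n : ℕ, sigmaC 1 (n + 1) * qq τ ^ (n + 1)

/-- normalized Eisenstein series E₄ -/
def E4 (τ : ℂ) : ℂ := 1 + 240 * ∑' n : ℕ, sigmaC 3 (n + 1) * qq τ ^ (n + 1)

/-- normalized Eisenstein series E₆ -/
def E6 (τ : ℂ) : ℂ := 1 - 504 * ∑' n : ℕ, sigmaC 5 (n + 1) * qq τ ^ (n + 1)

/-- elliptic invariant g₂ -/
def g2 (τ : ℂ) : ℂ := (4 * (Real.pi : ℂ) ^ 4 / 3) * E4 τ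

/-- elliptic invariant g₃ -/
def g3 (τ : ℂ) : ℂ := (8 * (Real.pi : ℂ) ^ 6 / 27) * E6 τ

/-- quasi-period η₁ -/
def eta1 (τ : ℂ) : ℂ := ((Real.pi : ℂ) ^ 2 / 3) * E2 τ

/-- quasi-period η₂ (Legendre relation) -/
def eta2 (τ : ℂ) : ℂ := τ * eta1 τ - 2 * (Real.pi : ℂ) * Complex.I

/-- the function h = g₂² − 18η₁g₃ -/
def hh (τ : ℂ) : ℂ := g2 τ ^ 2 - 18 * eta1 τ * g3 τ

/-- the family f_C -/
def f (C τ : ℂ) : ℂ := (C - τ) * g2 τ ^ 2 - 18 * (C * eta1 τ - eta2 τ) * g3 τ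

end

/-!
Since `g₂`, `g₃`, `η₁` are constant multiples of `E₄`, `E₆`, `E₂`, the claim is Ramanujan's
identity `E₆' = πi (E₂ E₆ - E₄²)`. Differentiating the `q`-series termwise and multiplying them
as Cauchy products reduces it to the divisor-sum identity
`1008 n σ₅(n) = 24 σ₁(n) + 480 σ₃(n) + 504 σ₅(n) + 57600 ∑ σ₃ σ₃ - 12096 ∑ σ₁ σ₅`.
This is proved by Liouville's elementary method: the sum of `P (a, b)` over the positive solutions
of `a x + b y = n` collapses to divisor sums whenever `F (a, c) = F (a, a + c) - P (a, a + c)` and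
symmetrically. The pairs with `F = (a b (a + b))²` and `F = (a² + a b + b²)³` give two such
relations, and eliminating `σ₇` between them leaves the identity.
-/

open Finset

theorem Finset.sum_filter_lt_add_sum_filter_gt_add_sum_filter_eq {ι α M : Type*} [LinearOrder α]
    [AddCommMonoid M] (s : Finset ι) (u v : ι → α) (g : ι → M) :
    ∑ i ∈ s.filter (fun i => u i < v i), g i + ∑ i ∈ s.filter (fun i => v i < u i), g i
      + ∑ i ∈ s.filter (fun i => u i = v i), g i = ∑ i ∈ s, g i := by
  rw [← sum_filter_add_sum_filter_not s (fun i => u i < v i),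
    ← sum_filter_add_sum_filter_not (s.filter fun i => ¬ u i < v i) (fun i => v i < u i),
    filter_filter, filter_filter, add_assoc]
  congr 3 <;> ext i <;> simp only [mem_filter] <;> grind

lemma Finset.sum_Ico_one_pow_eq {R : Type*} [Semiring R] {k : ℕ} (c : ℕ → R)
    (hc : ∀ d : ℕ, c (d + 1) = c d + (d : R) ^ k) (hc₁ : c 1 = 0) {d : ℕ} (hd : 1 ≤ d) :
    ∑ u ∈ Finset.Ico 1 d, (u : R) ^ k = c d := by
  induction d, hd using Nat.le_induction with
  | base => simp [hc₁]
  | succ d hd ih => rw [Finset.sum_Ico_succ_top hd, ih, hc]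

lemma faulhaber₀ {R : Type*} [CommRing R] {d : ℕ} (hd : 1 ≤ d) :
    ∑ u ∈ Finset.Ico 1 d, (u : R) ^ 0 = d - 1 := by
  apply Finset.sum_Ico_one_pow_eq _ (fun _ => ?_) ?_ hd <;> push_cast <;> ring

section Faulhaber

variable {K : Type*} [Field K] [CharZero K] {d : ℕ}

lemma faulhaber₁ (hd : 1 ≤ d) : ∑ u ∈ Finset.Ico 1 d, (u : K) ^ 1 = ((d : K) ^ 2 - d) / 2 := by
  apply Finset.sum_Ico_one_pow_eq _ (fun _ => ?_) ?_ hd <;> push_cast <;> ring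

lemma faulhaber₂ (hd : 1 ≤ d) :
    ∑ u ∈ Finset.Ico 1 d, (u : K) ^ 2 = (2 * (d : K) ^ 3 - 3 * (d : K) ^ 2 + d) / 6 := by
  apply Finset.sum_Ico_one_pow_eq _ (fun _ => ?_) ?_ hd <;> push_cast <;> ring

lemma faulhaber₃ (hd : 1 ≤ d) :
    ∑ u ∈ Finset.Ico 1 d, (u : K) ^ 3 = ((d : K) ^ 4 - 2 * (d : K) ^ 3 + (d : K) ^ 2) / 4 := by
  apply Finset.sum_Ico_one_pow_eq _ (fun _ => ?_) ?_ hd <;> push_cast <;> ring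

lemma faulhaber₄ (hd : 1 ≤ d) : ∑ u ∈ Finset.Ico 1 d, (u : K) ^ 4
    = (6 * (d : K) ^ 5 - 15 * (d : K) ^ 4 + 10 * (d : K) ^ 3 - d) / 30 := by
  apply Finset.sum_Ico_one_pow_eq _ (fun _ => ?_) ?_ hd <;> push_cast <;> ring

lemma faulhaber₅ (hd : 1 ≤ d) : ∑ u ∈ Finset.Ico 1 d, (u : K) ^ 5
    = (2 * (d : K) ^ 6 - 6 * (d : K) ^ 5 + 5 * (d : K) ^ 4 - (d : K) ^ 2) / 12 := by
  apply Finset.sum_Ico_one_pow_eq _ (fun _ => ?_) ?_ hd <;> push_cast <;> ring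

lemma faulhaber₆ (hd : 1 ≤ d) : ∑ u ∈ Finset.Ico 1 d, (u : K) ^ 6
    = (6 * (d : K) ^ 7 - 21 * (d : K) ^ 6 + 21 * (d : K) ^ 5 - 7 * (d : K) ^ 3 + d) / 42 := by
  apply Finset.sum_Ico_one_pow_eq _ (fun _ => ?_) ?_ hd <;> push_cast <;> ring

end Faulhaber

namespace Liouville

def solutions (n : ℕ) : Finset (ℕ × ℕ × ℕ × ℕ) :=
  (Finset.Icc 1 n ×ˢ Finset.Icc 1 n ×ˢ Finset.Icc 1 n ×ˢ Finset.Icc 1 n).filter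
    fun p => p.1 * p.2.2.1 + p.2.1 * p.2.2.2 = n

@[simp]
lemma mem_solutions {n a b x y : ℕ} :
    (a, b, x, y) ∈ solutions n ↔ 0 < a ∧ 0 < b ∧ 0 < x ∧ 0 < y ∧ a * x + b * y = n := by
  simp only [solutions, mem_filter, mem_product, Finset.mem_Icc]
  constructor
  · rintro ⟨⟨⟨ha, -⟩, ⟨hb, -⟩, ⟨hx, -⟩, ⟨hy, -⟩⟩, h⟩
    exact ⟨ha, hb, hx, hy, h⟩
  · rintro ⟨ha, hb, hx, hy, h⟩
    exact ⟨⟨⟨ha, by nlinarith⟩, ⟨hb, by nlinarith⟩, ⟨hx, by nlinarith⟩, ⟨hy, by nlinarith⟩⟩, h⟩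

section Shears

variable {M : Type*} [AddCommMonoid M] (n : ℕ) (F : ℕ → ℕ → M)

lemma sum_filter_y_lt_x :
    ∑ p ∈ (solutions n).filter (fun p => p.2.2.2 < p.2.2.1), F p.1 p.2.1
      = ∑ p ∈ (solutions n).filter (fun p => p.1 < p.2.1), F p.1 (p.2.1 - p.1) := by
  refine sum_nbij' (fun p => (p.1, p.1 + p.2.1, p.2.2.1 - p.2.2.2, p.2.2.2))
    (fun p => (p.1, p.2.1 - p.1, p.2.2.1 + p.2.2.2, p.2.2.2)) ?_ ?_ ?_ ?_ ?_
  · rintro ⟨a, b, x, y⟩ hp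
    simp only [mem_filter, mem_solutions] at hp ⊢
    obtain ⟨⟨ha, hb, hx, hy, h⟩, hyx⟩ := hp
    obtain ⟨c, rfl⟩ := Nat.exists_eq_add_of_lt hyx
    refine ⟨⟨ha, by omega, by omega, hy, ?_⟩, by omega⟩
    rw [show y + c + 1 - y = c + 1 by omega]
    linear_combination h
  · rintro ⟨a, b, x, y⟩ hp
    simp only [mem_filter, mem_solutions] at hp ⊢
    obtain ⟨⟨ha, hb, hx, hy, h⟩, hab⟩ := hp
    obtain ⟨c, rfl⟩ := Nat.exists_eq_add_of_lt hab
    refine ⟨⟨ha, by omega, by omega, hy, ?_⟩, by omega⟩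
    rw [show a + c + 1 - a = c + 1 by omega]
    linear_combination h
  · rintro ⟨a, b, x, y⟩ hp
    simp only [mem_filter, mem_solutions] at hp
    simp only [Prod.mk.injEq, true_and, and_true]
    omega
  · rintro ⟨a, b, x, y⟩ hp
    simp only [mem_filter, mem_solutions] at hp
    simp only [Prod.mk.injEq, true_and, and_true]
    omega
  · rintro ⟨a, b, x, y⟩ -
    simp only [Nat.add_sub_cancel_left]

lemma sum_filter_x_lt_y :
    ∑ p ∈ (solutions n).filter (fun p => p.2.2.1 < p.2.2.2), F p.1 p.2.1
      = ∑ p ∈ (solutions n).filter (fun p => p.2.1 < p.1), F (p.1 - p.2.1) p.2.1 := by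
  refine sum_nbij' (fun p => (p.1 + p.2.1, p.2.1, p.2.2.1, p.2.2.2 - p.2.2.1))
    (fun p => (p.1 - p.2.1, p.2.1, p.2.2.1, p.2.2.2 + p.2.2.1)) ?_ ?_ ?_ ?_ ?_
  · rintro ⟨a, b, x, y⟩ hp
    simp only [mem_filter, mem_solutions] at hp ⊢
    obtain ⟨⟨ha, hb, hx, hy, h⟩, hxy⟩ := hp
    obtain ⟨c, rfl⟩ := Nat.exists_eq_add_of_lt hxy
    refine ⟨⟨by omega, hb, hx, by omega, ?_⟩, by omega⟩
    rw [show x + c + 1 - x = c + 1 by omega]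
    linear_combination h
  · rintro ⟨a, b, x, y⟩ hp
    simp only [mem_filter, mem_solutions] at hp ⊢
    obtain ⟨⟨ha, hb, hx, hy, h⟩, hba⟩ := hp
    obtain ⟨c, rfl⟩ := Nat.exists_eq_add_of_lt hba
    refine ⟨⟨by omega, hb, hx, by omega, ?_⟩, by omega⟩
    rw [show b + c + 1 - b = c + 1 by omega]
    linear_combination h
  · rintro ⟨a, b, x, y⟩ hp
    simp only [mem_filter, mem_solutions] at hp
    simp only [Prod.mk.injEq, true_and]
    omega
  · rintro ⟨a, b, x, y⟩ hp
    simp only [mem_filter, mem_solutions] at hp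
    simp only [Prod.mk.injEq, true_and]
    omega
  · rintro ⟨a, b, x, y⟩ -
    simp only [Nat.add_sub_cancel]

lemma sum_filter_x_eq_y :
    ∑ p ∈ (solutions n).filter (fun p => p.2.2.1 = p.2.2.2), F p.1 p.2.1
      = ∑ d ∈ n.divisors, ∑ u ∈ Finset.Ico 1 d, F u (d - u) := by
  rw [sum_sigma']
  refine sum_nbij' (fun p => ⟨p.1 + p.2.1, p.1⟩) (fun q => (q.2, q.1 - q.2, n / q.1, n / q.1))
    ?_ ?_ ?_ ?_ ?_
  · rintro ⟨a, b, x, y⟩ hp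
    simp only [mem_filter, mem_solutions] at hp
    obtain ⟨⟨ha, hb, hx, hy, h⟩, rfl⟩ := hp
    simp only [mem_sigma, Nat.mem_divisors, Finset.mem_Ico]
    exact ⟨⟨⟨x, by linear_combination h.symm⟩, by nlinarith⟩, ha, by omega⟩
  · rintro ⟨d, u⟩ hq
    simp only [mem_sigma, Nat.mem_divisors, Finset.mem_Ico] at hq
    obtain ⟨⟨hdn, hn⟩, hu, hud⟩ := hq
    have hdiv : d * (n / d) = n := Nat.mul_div_cancel' hdn
    have hpos : 0 < n / d := Nat.pos_of_ne_zero fun h => hn (by rw [← hdiv, h, mul_zero])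
    simp only [mem_filter, mem_solutions]
    refine ⟨⟨by omega, by omega, hpos, hpos, ?_⟩, trivial⟩
    rw [← add_mul, Nat.add_sub_cancel' hud.le, hdiv]
  · rintro ⟨a, b, x, y⟩ hp
    simp only [mem_filter, mem_solutions] at hp
    obtain ⟨⟨ha, hb, hx, hy, h⟩, rfl⟩ := hp
    have hx : n / (a + b) = x := by
      rw [← h, ← add_mul, Nat.mul_div_cancel_left x (by omega)]
    simp only [Prod.mk.injEq, hx, true_and, and_true]
    omega
  · rintro ⟨d, u⟩ hq
    simp only [mem_sigma, Finset.mem_Ico] at hq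
    simp only [Nat.add_sub_cancel' hq.2.2.le]
  · rintro ⟨a, b, x, y⟩ -
    simp only [Nat.add_sub_cancel_left]

lemma sum_filter_a_eq_b :
    ∑ p ∈ (solutions n).filter (fun p => p.1 = p.2.1), F p.1 p.2.1
      = ∑ q ∈ n.divisorsAntidiagonal, (q.2 - 1) • F q.1 q.1 := by
  have hsigma : ∑ p ∈ (solutions n).filter (fun p => p.1 = p.2.1), F p.1 p.2.1
      = ∑ q ∈ n.divisorsAntidiagonal.sigma (fun q => Finset.Ico 1 q.2), F q.1.1 q.1.1 := by
    refine sum_nbij' (fun p => ⟨(p.1, p.2.2.1 + p.2.2.2), p.2.2.1⟩)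
      (fun q => (q.1.1, q.1.1, q.2, q.1.2 - q.2)) ?_ ?_ ?_ ?_ ?_
    · rintro ⟨a, b, x, y⟩ hp
      simp only [mem_filter, mem_solutions] at hp
      obtain ⟨⟨ha, hb, hx, hy, h⟩, rfl⟩ := hp
      simp only [mem_sigma, Nat.mem_divisorsAntidiagonal, Finset.mem_Ico]
      exact ⟨⟨by linear_combination h, by nlinarith⟩, hx, by omega⟩
    · rintro ⟨⟨a, e⟩, x⟩ hq
      simp only [mem_sigma, Nat.mem_divisorsAntidiagonal, Finset.mem_Ico] at hq
      obtain ⟨⟨h, hn⟩, hx, hxe⟩ := hq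
      simp only [mem_filter, mem_solutions]
      have ha : 0 < a := Nat.pos_of_ne_zero fun ha => hn (by rw [← h, ha, zero_mul])
      refine ⟨⟨ha, ha, hx, by omega, ?_⟩, trivial⟩
      rw [← mul_add, Nat.add_sub_cancel' hxe.le, h]
    · rintro ⟨a, b, x, y⟩ hp
      simp only [mem_filter, mem_solutions] at hp
      simp only [Prod.mk.injEq, true_and, hp.2]
      omega
    · rintro ⟨⟨a, e⟩, x⟩ hq
      simp only [mem_sigma, Finset.mem_Ico] at hq
      simp only [Nat.add_sub_cancel' hq.2.2.le]
    · rintro ⟨a, b, x, y⟩ hp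
      simp only [mem_filter, mem_solutions] at hp
      simp only [hp.2]
  rw [hsigma, sum_sigma]
  simp only [sum_const, Nat.card_Ico]

end Shears

/-- Split the solutions according to `x < y`, `y < x`, `x = y` and to `a < b`, `b < a`, `a = b`.
The shears `(a, b, x, y) ↦ (a, a + b, x - y, y)` and `(a + b, b, x, y - x)` identify the
off-diagonal pieces, and the relations between `F` and `P` cancel them, leaving the diagonals. -/
theorem sum_solutions_eq {G : Type*} [AddCommGroup G] (n : ℕ) (F P : ℕ → ℕ → G)
    (hF₁ : ∀ a c, F a c = F a (a + c) - P a (a + c))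
    (hF₂ : ∀ c b, F c b = F (c + b) b - P (c + b) b) :
    ∑ p ∈ solutions n, P p.1 p.2.1
      = ∑ q ∈ n.divisorsAntidiagonal, (q.2 - 1) • (P q.1 q.1 - F q.1 q.1)
        + ∑ d ∈ n.divisors, ∑ u ∈ Finset.Ico 1 d, F u (d - u) := by
  have hxy := sum_filter_lt_add_sum_filter_gt_add_sum_filter_eq (solutions n)
    (·.2.2.1) (·.2.2.2) (fun p => F p.1 p.2.1)
  have hF := sum_filter_lt_add_sum_filter_gt_add_sum_filter_eq (solutions n)
    (·.1) (·.2.1) (fun p => F p.1 p.2.1)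
  have hP := sum_filter_lt_add_sum_filter_gt_add_sum_filter_eq (solutions n)
    (·.1) (·.2.1) (fun p => P p.1 p.2.1)
  rw [sum_filter_x_lt_y, sum_filter_y_lt_x, sum_filter_x_eq_y] at hxy
  rw [sum_filter_a_eq_b] at hF hP
  have hlt : ∑ p ∈ (solutions n).filter (fun p => p.1 < p.2.1), F p.1 (p.2.1 - p.1)
      = ∑ p ∈ (solutions n).filter (fun p => p.1 < p.2.1), (F p.1 p.2.1 - P p.1 p.2.1) :=
    sum_congr rfl fun p hp => by
      rw [hF₁, Nat.add_sub_cancel' (mem_filter.mp hp).2.le]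
  have hgt : ∑ p ∈ (solutions n).filter (fun p => p.2.1 < p.1), F (p.1 - p.2.1) p.2.1
      = ∑ p ∈ (solutions n).filter (fun p => p.2.1 < p.1), (F p.1 p.2.1 - P p.1 p.2.1) :=
    sum_congr rfl fun p hp => by
      rw [hF₂, Nat.sub_add_cancel (mem_filter.mp hp).2.le]
  rw [hlt, hgt, sum_sub_distrib, sum_sub_distrib, ← hF] at hxy
  rw [← hP, ← sub_eq_zero, ← sub_eq_zero.mpr hxy.symm]
  simp only [smul_sub, sum_sub_distrib]
  abel

lemma sigmaC_eq_sum_divisorsAntidiagonal (k n : ℕ) :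
    sigmaC k n = ∑ q ∈ n.divisorsAntidiagonal, (q.1 : ℂ) ^ k :=
  (Nat.sum_divisorsAntidiagonal (fun d _ => (d : ℂ) ^ k)).symm

lemma sum_antidiagonal_sigmaC_mul_sigmaC (r s n : ℕ) :
    ∑ ij ∈ antidiagonal n, sigmaC r ij.1 * sigmaC s ij.2
      = ∑ p ∈ solutions n, (p.1 : ℂ) ^ r * (p.2.1 : ℂ) ^ s := by
  simp only [sigmaC_eq_sum_divisorsAntidiagonal, sum_mul_sum, ← sum_product']
  rw [sum_sigma']
  refine sum_nbij' (fun z => (z.2.1.1, z.2.2.1, z.2.1.2, z.2.2.2))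
    (fun p => ⟨(p.1 * p.2.2.1, p.2.1 * p.2.2.2), ((p.1, p.2.2.1), (p.2.1, p.2.2.2))⟩)
    ?_ ?_ ?_ ?_ ?_
  · rintro ⟨⟨i, j⟩, ⟨a, x⟩, ⟨b, y⟩⟩ hz
    simp only [mem_sigma, HasAntidiagonal.mem_antidiagonal, mem_product,
      Nat.mem_divisorsAntidiagonal] at hz
    obtain ⟨rfl, ⟨rfl, hi⟩, ⟨rfl, hj⟩⟩ := hz
    simp only [mem_solutions]
    exact ⟨Nat.pos_of_ne_zero (left_ne_zero_of_mul hi), Nat.pos_of_ne_zero (left_ne_zero_of_mul hj),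
      Nat.pos_of_ne_zero (right_ne_zero_of_mul hi), Nat.pos_of_ne_zero (right_ne_zero_of_mul hj),
      trivial⟩
  · rintro ⟨a, b, x, y⟩ hp
    simp only [mem_solutions] at hp
    obtain ⟨ha, hb, hx, hy, h⟩ := hp
    simp only [mem_sigma, HasAntidiagonal.mem_antidiagonal, mem_product,
      Nat.mem_divisorsAntidiagonal]
    exact ⟨h, ⟨trivial, by positivity⟩, ⟨trivial, by positivity⟩⟩
  · rintro ⟨⟨i, j⟩, ⟨a, x⟩, ⟨b, y⟩⟩ hz
    simp only [mem_sigma, HasAntidiagonal.mem_antidiagonal, mem_product,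
      Nat.mem_divisorsAntidiagonal] at hz
    obtain ⟨-, ⟨rfl, -⟩, ⟨rfl, -⟩⟩ := hz
    rfl
  · exact fun _ _ => rfl
  · exact fun _ _ => rfl

def F₁ (a b : ℕ) : ℂ := ((a : ℂ) * b * (a + b)) ^ 2

def P₁ (a b : ℕ) : ℂ := 4 * (a : ℂ) ^ 3 * (b : ℂ) ^ 3

def F₂ (a b : ℕ) : ℂ := ((a : ℂ) ^ 2 + a * b + (b : ℂ) ^ 2) ^ 3

def P₂ (a b : ℕ) : ℂ :=
  14 * (a : ℂ) ^ 3 * (b : ℂ) ^ 3 + 6 * (a : ℂ) ^ 5 * b + 6 * (a : ℂ) * (b : ℂ) ^ 5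

lemma sum_Ico_F₁ {d : ℕ} (hd : 1 ≤ d) :
    ∑ u ∈ Finset.Ico 1 d, F₁ u (d - u) = ((d : ℂ) ^ 7 - (d : ℂ) ^ 3) / 30 := by
  have hF : ∀ u ∈ Finset.Ico 1 d, F₁ u (d - u)
      = (d : ℂ) ^ 4 * (u : ℂ) ^ 2 - 2 * (d : ℂ) ^ 3 * (u : ℂ) ^ 3 + (d : ℂ) ^ 2 * (u : ℂ) ^ 4 :=
    fun u hu => by
      rw [F₁, Nat.cast_sub (Finset.mem_Ico.mp hu).2.le]
      ring
  rw [sum_congr rfl hF, sum_add_distrib, sum_sub_distrib, ← mul_sum, ← mul_sum, ← mul_sum,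
    faulhaber₂ hd, faulhaber₃ hd, faulhaber₄ hd]
  ring

lemma sum_Ico_F₂ {d : ℕ} (hd : 1 ≤ d) : ∑ u ∈ Finset.Ico 1 d, F₂ u (d - u)
    = 83 / 140 * (d : ℂ) ^ 7 - (d : ℂ) ^ 6 + 1 / 2 * (d : ℂ) ^ 5 - 7 / 60 * (d : ℂ) ^ 3
      + 1 / 42 * d := by
  have hF : ∀ u ∈ Finset.Ico 1 d, F₂ u (d - u)
      = (d : ℂ) ^ 6 * (u : ℂ) ^ 0 - 3 * (d : ℂ) ^ 5 * (u : ℂ) ^ 1 + 6 * (d : ℂ) ^ 4 * (u : ℂ) ^ 2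
        - 7 * (d : ℂ) ^ 3 * (u : ℂ) ^ 3 + 6 * (d : ℂ) ^ 2 * (u : ℂ) ^ 4
        - 3 * (d : ℂ) * (u : ℂ) ^ 5 + (u : ℂ) ^ 6 :=
    fun u hu => by
      rw [F₂, Nat.cast_sub (Finset.mem_Ico.mp hu).2.le]
      ring
  simp only [sum_congr rfl hF, sum_add_distrib, sum_sub_distrib, ← mul_sum]
  rw [faulhaber₀ hd, faulhaber₁ hd, faulhaber₂ hd, faulhaber₃ hd, faulhaber₄ hd, faulhaber₅ hd,
    faulhaber₆ hd]
  ring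

lemma sum_divisorsAntidiagonal_snd_mul_fst_pow_six (n : ℕ) :
    ∑ q ∈ n.divisorsAntidiagonal, (q.2 : ℂ) * (q.1 : ℂ) ^ 6 = n * sigmaC 5 n := by
  rw [sigmaC_eq_sum_divisorsAntidiagonal, mul_sum]
  refine sum_congr rfl fun q hq => ?_
  rw [← (Nat.mem_divisorsAntidiagonal.mp hq).1]
  push_cast
  ring

lemma liouville_F₁ (n : ℕ) :
    4 * ∑ ij ∈ antidiagonal n, sigmaC 3 ij.1 * sigmaC 3 ij.2 = (sigmaC 7 n - sigmaC 3 n) / 30 := by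
  have h := sum_solutions_eq n F₁ P₁ (fun a c => by simp only [F₁, P₁]; push_cast; ring)
    (fun c b => by simp only [F₁, P₁]; push_cast; ring)
  have hdiag : ∀ a, P₁ a a - F₁ a a = 0 := fun a => by simp only [F₁, P₁]; ring
  simp only [hdiag, smul_zero, sum_const_zero, zero_add] at h
  rw [sum_antidiagonal_sigmaC_mul_sigmaC, mul_sum]
  calc ∑ p ∈ solutions n, 4 * ((p.1 : ℂ) ^ 3 * (p.2.1 : ℂ) ^ 3)
      = ∑ p ∈ solutions n, P₁ p.1 p.2.1 := sum_congr rfl fun p _ => by rw [P₁]; ring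
    _ = _ := by
      rw [h, sum_congr rfl fun d hd => sum_Ico_F₁ (Nat.pos_of_mem_divisors hd), ← sum_div,
        sum_sub_distrib]
      rfl

lemma liouville_F₂ (n : ℕ) :
    14 * ∑ ij ∈ antidiagonal n, sigmaC 3 ij.1 * sigmaC 3 ij.2
      + 12 * ∑ ij ∈ antidiagonal n, sigmaC 1 ij.1 * sigmaC 5 ij.2
      = 83 / 140 * sigmaC 7 n + 1 / 2 * sigmaC 5 n - 7 / 60 * sigmaC 3 n + 1 / 42 * sigmaC 1 n
        - n * sigmaC 5 n := by
  have h := sum_solutions_eq n F₂ P₂ (fun a c => by simp only [F₂, P₂]; push_cast; ring)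
    (fun c b => by simp only [F₂, P₂]; push_cast; ring)
  have hdiag : ∀ q ∈ n.divisorsAntidiagonal, (q.2 - 1) • (P₂ q.1 q.1 - F₂ q.1 q.1)
      = (q.1 : ℂ) ^ 6 - (q.2 : ℂ) * (q.1 : ℂ) ^ 6 := fun q hq => by
    have hq₂ : 1 ≤ q.2 := Nat.pos_of_ne_zero (Nat.right_ne_zero_of_mem_divisorsAntidiagonal hq)
    rw [nsmul_eq_mul, Nat.cast_sub hq₂, F₂, P₂]
    push_cast
    ring
  rw [sum_congr rfl hdiag, sum_sub_distrib, sum_divisorsAntidiagonal_snd_mul_fst_pow_six,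
    ← sigmaC_eq_sum_divisorsAntidiagonal,
    sum_congr rfl fun d hd => sum_Ico_F₂ (Nat.pos_of_mem_divisors hd)] at h
  have hσ : ∀ k, ∑ d ∈ n.divisors, (d : ℂ) ^ k = sigmaC k n := fun _ => rfl
  have hσ₁ : ∑ d ∈ n.divisors, (d : ℂ) = sigmaC 1 n := by simp only [sigmaC, pow_one]
  simp only [sum_add_distrib, sum_sub_distrib, ← mul_sum, hσ, hσ₁] at h
  have hP : ∑ p ∈ solutions n, P₂ p.1 p.2.1
      = 14 * ∑ ij ∈ antidiagonal n, sigmaC 3 ij.1 * sigmaC 3 ij.2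
        + 6 * ∑ ij ∈ antidiagonal n, sigmaC 5 ij.1 * sigmaC 1 ij.2
        + 6 * ∑ ij ∈ antidiagonal n, sigmaC 1 ij.1 * sigmaC 5 ij.2 := by
    simp only [sum_antidiagonal_sigmaC_mul_sigmaC, mul_sum, ← sum_add_distrib]
    exact sum_congr rfl fun p _ => by rw [P₂]; ring
  have hswap : ∑ ij ∈ antidiagonal n, sigmaC 5 ij.1 * sigmaC 1 ij.2
      = ∑ ij ∈ antidiagonal n, sigmaC 1 ij.1 * sigmaC 5 ij.2 := by
    rw [← Nat.sum_antidiagonal_swap]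
    exact sum_congr rfl fun ij _ => mul_comm _ _
  linear_combination hP.symm.trans h - 6 * hswap

end Liouville

theorem sigmaC_convolution_identity (n : ℕ) :
    1008 * n * sigmaC 5 n
      = 24 * sigmaC 1 n + 480 * sigmaC 3 n + 504 * sigmaC 5 n
        + 57600 * ∑ ij ∈ antidiagonal n, sigmaC 3 ij.1 * sigmaC 3 ij.2
        - 12096 * ∑ ij ∈ antidiagonal n, sigmaC 1 ij.1 * sigmaC 5 ij.2 := by
  linear_combination (-17928 : ℂ) * Liouville.liouville_F₁ n + 1008 * Liouville.liouville_F₂ n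

lemma norm_qq (τ : ℂ) : ‖qq τ‖ = Real.exp (-(2 * Real.pi * τ.im)) := by
  rw [qq, Complex.norm_exp]
  congr 1
  simp [Complex.mul_re, Complex.mul_im]

lemma norm_qq_lt_one {τ : ℂ} (hτ : 0 < τ.im) : ‖qq τ‖ < 1 := by
  rw [norm_qq, Real.exp_lt_one_iff]
  nlinarith [Real.pi_pos]

lemma norm_sigmaC_le (k m : ℕ) : ‖sigmaC k m‖ ≤ (m : ℝ) ^ (k + 1) := by
  calc ‖sigmaC k m‖ ≤ ∑ d ∈ m.divisors, ‖(d : ℂ) ^ k‖ := norm_sum_le _ _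
    _ ≤ ∑ _d ∈ m.divisors, (m : ℝ) ^ k := sum_le_sum fun d hd => by
        rw [norm_pow, Complex.norm_natCast]
        exact pow_le_pow_left₀ d.cast_nonneg (Nat.cast_le.mpr (Nat.divisor_le hd)) k
    _ = m.divisors.card * (m : ℝ) ^ k := by rw [sum_const, nsmul_eq_mul]
    _ ≤ m * (m : ℝ) ^ k := by
        gcongr
        exact_mod_cast Nat.card_divisors_le_self m
    _ = (m : ℝ) ^ (k + 1) := by ring

lemma summable_norm_mul_pow_of_norm_le_pow {𝕜 : Type*} [NormedDivisionRing 𝕜] {c : ℕ → 𝕜}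
    {K : ℕ} (hc : ∀ m, ‖c m‖ ≤ (m : ℝ) ^ K) {q : 𝕜} (hq : ‖q‖ < 1) :
    Summable fun n => ‖c n * q ^ n‖ := by
  have hgeom := summable_pow_mul_geometric_of_norm_lt_one (R := ℝ) K (r := ‖q‖) (by rwa [norm_norm])
  refine hgeom.of_nonneg_of_le (fun _ => norm_nonneg _) fun n => ?_
  rw [norm_mul, norm_pow]
  gcongr
  exact hc n

lemma hasSum_sum_antidiagonal_mul_pow {R : Type*} [NormedCommRing R] [CompleteSpace R]
    {c d : ℕ → R} {q : R}
    (hc : Summable fun n => ‖c n * q ^ n‖) (hd : Summable fun n => ‖d n * q ^ n‖) :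
    HasSum (fun n => (∑ ij ∈ antidiagonal n, c ij.1 * d ij.2) * q ^ n)
      ((∑' n, c n * q ^ n) * ∑' n, d n * q ^ n) := by
  have hterm : ∀ n, ∑ ij ∈ antidiagonal n, c ij.1 * q ^ ij.1 * (d ij.2 * q ^ ij.2)
      = (∑ ij ∈ antidiagonal n, c ij.1 * d ij.2) * q ^ n := fun n => by
    rw [sum_mul]
    refine sum_congr rfl fun ij hij => ?_
    rw [← HasAntidiagonal.mem_antidiagonal.mp hij, pow_add]
    ring
  rw [tsum_mul_tsum_eq_tsum_sum_antidiagonal_of_summable_norm hc hd]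
  simp only [hterm]
  exact (summable_norm_sum_mul_antidiagonal_of_summable_norm hc hd).of_norm.congr hterm |>.hasSum

lemma hasDerivAt_qq_pow (n : ℕ) (τ : ℂ) :
    HasDerivAt (fun τ => qq τ ^ n) (2 * Real.pi * I * n * qq τ ^ n) τ := by
  have hqq : HasDerivAt qq (qq τ * (2 * Real.pi * I)) τ :=
    (((hasDerivAt_id τ).const_mul (2 * (Real.pi : ℂ) * I)).cexp).congr_deriv (by simp [qq])
  refine (hqq.fun_pow n).congr_deriv ?_
  cases n with
  | zero => simp
  | succ n => push_cast; ring

theorem hasDerivAt_tsum_mul_qq_pow {c : ℕ → ℂ} {K : ℕ} (hc : ∀ m, ‖c m‖ ≤ (m : ℝ) ^ K)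
    {τ : ℂ} (hτ : 0 < τ.im) :
    HasDerivAt (fun τ => ∑' n, c n * qq τ ^ n)
      (2 * Real.pi * I * ∑' n, n * c n * qq τ ^ n) τ := by
  set U : Set ℂ := {w | τ.im / 2 < w.im}
  have hU : IsOpen U := isOpen_lt continuous_const continuous_im
  have hτU : τ ∈ U := show τ.im / 2 < τ.im by linarith
  set ρ := Real.exp (-(Real.pi * τ.im))
  have hρ : ‖ρ‖ < 1 := by
    rw [Real.norm_eq_abs, abs_of_pos (Real.exp_pos _), Real.exp_lt_one_iff]
    nlinarith [Real.pi_pos]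
  have hbound : ∀ n, ∀ w ∈ U, ‖c n * qq w ^ n‖ ≤ (n : ℝ) ^ K * ρ ^ n := fun n w hw => by
    rw [norm_mul, norm_pow]
    gcongr
    · exact hc n
    · rw [norm_qq]
      refine Real.exp_le_exp.mpr ?_
      nlinarith [Real.pi_pos, show τ.im / 2 < w.im from hw]
  have hdiff : ∀ n, DifferentiableOn ℂ (fun w => c n * qq w ^ n) U := fun n w _ =>
    ((hasDerivAt_qq_pow n w).const_mul (c n)).differentiableAt.differentiableWithinAt
  have hsum := summable_pow_mul_geometric_of_norm_lt_one K hρ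
  have hderiv := hasSum_deriv_of_summable_norm hsum hdiff hU hbound hτU
  simp only [((hasDerivAt_qq_pow _ τ).const_mul _).deriv] at hderiv
  have hvalue : deriv (fun τ => ∑' n, c n * qq τ ^ n) τ
      = 2 * Real.pi * I * ∑' n, n * c n * qq τ ^ n := by
    rw [← tsum_mul_left, ← hderiv.tsum_eq]
    exact tsum_congr fun n => by ring
  rw [← hvalue]
  exact ((differentiableOn_tsum_of_summable_norm hsum hdiff hU hbound).differentiableAt
    (hU.mem_nhds hτU)).hasDerivAt

lemma tsum_sigmaC_succ_mul_pow (k : ℕ) (q : ℂ) :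
    ∑' n, sigmaC k (n + 1) * q ^ (n + 1) = ∑' n, sigmaC k n * q ^ n := by
  refine Nat.succ_injective.tsum_eq (f := fun n => sigmaC k n * q ^ n) fun n hn => ?_
  cases n with
  | zero => simp [sigmaC] at hn
  | succ n => exact ⟨n, rfl⟩

lemma E2_eq (τ : ℂ) : E2 τ = 1 - 24 * ∑' n, sigmaC 1 n * qq τ ^ n := by
  rw [E2, tsum_sigmaC_succ_mul_pow]

lemma E4_eq (τ : ℂ) : E4 τ = 1 + 240 * ∑' n, sigmaC 3 n * qq τ ^ n := by
  rw [E4, tsum_sigmaC_succ_mul_pow]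

lemma E6_eq (τ : ℂ) : E6 τ = 1 - 504 * ∑' n, sigmaC 5 n * qq τ ^ n := by
  rw [E6, tsum_sigmaC_succ_mul_pow]

/-- Ramanujan's identity `q dE₆/dq = (E₂ E₆ - E₄²) / 2`, with `d/dτ = 2πi q d/dq`. -/
theorem hasDerivAt_E6 {τ : ℂ} (hτ : 0 < τ.im) :
    HasDerivAt E6 (Real.pi * I * (E2 τ * E6 τ - E4 τ ^ 2)) τ := by
  have hs : ∀ k, Summable fun n => ‖sigmaC k n * qq τ ^ n‖ := fun k =>
    summable_norm_mul_pow_of_norm_le_pow (norm_sigmaC_le k) (norm_qq_lt_one hτ)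
  have hcoeff : HasSum (fun n => 1008 * (n * sigmaC 5 n * qq τ ^ n))
      (24 * ∑' n, sigmaC 1 n * qq τ ^ n + 480 * ∑' n, sigmaC 3 n * qq τ ^ n
        + 504 * ∑' n, sigmaC 5 n * qq τ ^ n
        + 57600 * ((∑' n, sigmaC 3 n * qq τ ^ n) * ∑' n, sigmaC 3 n * qq τ ^ n)
        - 12096 * ((∑' n, sigmaC 1 n * qq τ ^ n) * ∑' n, sigmaC 5 n * qq τ ^ n)) := by
    have hsum := (((((hs 1).of_norm.hasSum.mul_left 24).add
      ((hs 3).of_norm.hasSum.mul_left 480)).add ((hs 5).of_norm.hasSum.mul_left 504)).add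
        ((hasSum_sum_antidiagonal_mul_pow (hs 3) (hs 3)).mul_left 57600)).sub
        ((hasSum_sum_antidiagonal_mul_pow (hs 1) (hs 5)).mul_left 12096)
    exact hsum.congr_fun fun n => by linear_combination qq τ ^ n * sigmaC_convolution_identity n
  have hW := hcoeff.tsum_eq
  rw [tsum_mul_left] at hW
  have hE6 : E6 = fun τ => 1 - 504 * ∑' n, sigmaC 5 n * qq τ ^ n := funext E6_eq
  rw [E2_eq, E4_eq, E6_eq τ, hE6]
  refine (((hasDerivAt_tsum_mul_qq_pow (norm_sigmaC_le 5) hτ).const_mul 504).const_sub 1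
    ).congr_deriv ?_
  linear_combination (-(Real.pi : ℂ) * I) * hW

theorem g3_deriv (τ : ℂ) (hτ : 0 < τ.im) :
    deriv g3 τ = (-Complex.I / (6 * (Real.pi : ℂ))) * (g2 τ ^ 2 - 18 * eta1 τ * g3 τ) := by
  have h : HasDerivAt g3
      (8 * (Real.pi : ℂ) ^ 6 / 27 * (Real.pi * I * (E2 τ * E6 τ - E4 τ ^ 2))) τ :=
    (hasDerivAt_E6 hτ).const_mul _
  rw [h.deriv, g2, g3, eta1]
  field_simp
  ring
end

section
/- For C ∈ ℝ and τ in the upper half-plane, f_{1−C}(1−τ̄) = −conj(f_C(τ)), where f_C(τ) := (C−τ)g₂(τ)² − 18(Cη₁(τ) − η₂(τ))g₃(τ). Consequently, f_C(τ) = 0 if and only if f_{1−C}(1−τ̄) = 0. -/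
open Complex Filter Asymptotics Set

/-!
The reflection τ ↦ 1 - τ̄ sends q = e^{2πiτ} to q̄, because e^{2πi} = 1. All the q-expansions involved have real coefficients, so E₂, E₄, E₆ and hence g₂, g₃, η₁
commute with the reflection, while the Legendre relation gives η₂(1 - τ̄) = η̄₁ - η̄₂. Substituting
into f, the reflection C ↦ 1 - C̄ of the parameter exactly flips the sign of f̄.
-/

open ComplexConjugate

lemma qq_one_sub_conj (τ : ℂ) : qq (1 - conj τ) = conj (qq τ) := by
  have h : 2 * (Real.pi : ℂ) * I * (1 - conj τ) = conj (2 * Real.pi * I * τ) + 2 * Real.pi * I := by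
    simp only [map_mul, conj_I, conj_ofReal, map_ofNat]
    ring
  rw [qq, qq, h, exp_add, exp_two_pi_mul_I, mul_one, exp_conj]

lemma conj_sigmaC (k n : ℕ) : conj (sigmaC k n) = sigmaC k n := by
  simp [sigmaC]

lemma tsum_sigmaC_mul_qq_pow_one_sub_conj (k : ℕ) (τ : ℂ) :
    ∑' n : ℕ, sigmaC k (n + 1) * qq (1 - conj τ) ^ (n + 1)
      = conj (∑' n : ℕ, sigmaC k (n + 1) * qq τ ^ (n + 1)) := by
  have hterm (n : ℕ) : sigmaC k (n + 1) * qq (1 - conj τ) ^ (n + 1)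
      = conj (sigmaC k (n + 1) * qq τ ^ (n + 1)) := by
    rw [map_mul, map_pow, conj_sigmaC, qq_one_sub_conj]
  rw [tsum_congr hterm, Complex.conj_tsum]

lemma E2_one_sub_conj (τ : ℂ) : E2 (1 - conj τ) = conj (E2 τ) := by
  simp [E2, tsum_sigmaC_mul_qq_pow_one_sub_conj, map_ofNat]

lemma E4_one_sub_conj (τ : ℂ) : E4 (1 - conj τ) = conj (E4 τ) := by
  simp [E4, tsum_sigmaC_mul_qq_pow_one_sub_conj, map_ofNat]

lemma E6_one_sub_conj (τ : ℂ) : E6 (1 - conj τ) = conj (E6 τ) := by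
  simp [E6, tsum_sigmaC_mul_qq_pow_one_sub_conj, map_ofNat]

lemma g2_one_sub_conj (τ : ℂ) : g2 (1 - conj τ) = conj (g2 τ) := by
  simp [g2, E4_one_sub_conj, map_ofNat]

lemma g3_one_sub_conj (τ : ℂ) : g3 (1 - conj τ) = conj (g3 τ) := by
  simp [g3, E6_one_sub_conj, map_ofNat]

lemma eta1_one_sub_conj (τ : ℂ) : eta1 (1 - conj τ) = conj (eta1 τ) := by
  simp [eta1, E2_one_sub_conj, map_ofNat]

lemma eta2_one_sub_conj (τ : ℂ) : eta2 (1 - conj τ) = conj (eta1 τ) - conj (eta2 τ) := by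
  simp only [eta2, eta1_one_sub_conj, map_sub, map_mul, conj_I, conj_ofReal, map_ofNat]
  ring

lemma f_one_sub_conj (C τ : ℂ) : f (1 - conj C) (1 - conj τ) = -conj (f C τ) := by
  simp only [f, g2_one_sub_conj, g3_one_sub_conj, eta1_one_sub_conj, eta2_one_sub_conj, map_sub,
    map_mul, map_pow, map_ofNat]
  ring

theorem f_C_reflection_general (C : ℝ) (τ : ℂ) :
    f (1 - (C : ℂ)) (1 - (starRingEnd ℂ) τ) = -(starRingEnd ℂ) (f (C : ℂ) τ) ∧
    (f (C : ℂ) τ = 0 ↔ f (1 - (C : ℂ)) (1 - (starRingEnd ℂ) τ) = 0) := by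
  have key := f_one_sub_conj C τ
  rw [conj_ofReal] at key
  rw [key, neg_eq_zero, map_eq_zero]
  exact ⟨rfl, Iff.rfl⟩

theorem f_C_reflection (C : ℝ) (τ : ℂ) (hτ : 0 < τ.im) :
    f (1 - (C : ℂ)) (1 - (starRingEnd ℂ) τ) = -(starRingEnd ℂ) (f (C : ℂ) τ) ∧
    (f (C : ℂ) τ = 0 ↔ f (1 - (C : ℂ)) (1 - (starRingEnd ℂ) τ) = 0) :=
  f_C_reflection_general C τ
end

section
/- Let y₁(z) := 1/℘''(z;τ) where ℘ is the Weierstrass ℘-function for the lattice ℤ+ℤτ, assuming g₂(τ) ≠ 0, and define χ(z) := 18℘(z)²℘'(z) + (1/2)g₂℘'(z) + 2g₂²z − 36g₃ζ(z). Then χ'(z) = 7℘''(z)², the quasi-periods of χ are χ(z+1) − χ(z) = 2(g₂² − 18η₁g₃) and χ(z+τ) − χ(z) = 2(g₂²τ − 18η₂g₃), and y₂ := y₁·χ is a second solution of the ODE y'' = (y₁''/y₁)·y linearly independent from y₁. -/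
/-!
Along `S`, `χ' = 18 (℘² ℘')' + (g₂/2) ℘'' + 2 g₂² + 36 g₃ ℘`; eliminating `℘'²` with the cubic and
`℘''` with `6℘² − g₂/2` leaves `7 (℘'')² = 7 / y₁²`. Whenever `χ' = c / f²`, reduction of order gives
`(f χ)'' = f'' χ` and a constant Wronskian `W(f, f χ) = c`; here `c = 7 ≠ 0`. The quasi-periods of
`χ` come only from `2 g₂² z − 36 g₃ ζ`, since `℘` and `℘'` are periodic.
-/

open Complex

open Filter Topology

section ReductionOfOrder

variable {𝕜 : Type*} [NontriviallyNormedField 𝕜] {f χ : 𝕜 → 𝕜} {c z : 𝕜}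

theorem deriv_mul_of_hasDerivAt_div_sq {w : 𝕜} (hf : DifferentiableAt 𝕜 f w)
    (hχ : HasDerivAt χ (c / f w ^ 2) w) :
    deriv (fun v => f v * χ v) w = deriv f w * χ w + c / f w := by
  refine (hf.hasDerivAt.mul hχ).deriv.trans (congrArg _ ?_)
  rcases eq_or_ne (f w) 0 with h | h
  · simp [h]
  · field_simp

theorem wronskian_mul_of_hasDerivAt_div_sq (hf : DifferentiableAt 𝕜 f z)
    (hχ : HasDerivAt χ (c / f z ^ 2) z) (hf0 : f z ≠ 0) :
    f z * deriv (fun v => f v * χ v) z - deriv f z * (f z * χ z) = c := by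
  rw [deriv_mul_of_hasDerivAt_div_sq hf hχ]
  field_simp
  ring

theorem deriv_deriv_mul_of_hasDerivAt_div_sq (hf : ∀ᶠ w in 𝓝 z, DifferentiableAt 𝕜 f w)
    (hf' : DifferentiableAt 𝕜 (deriv f) z) (hχ : ∀ᶠ w in 𝓝 z, HasDerivAt χ (c / f w ^ 2) w)
    (hf0 : f z ≠ 0) :
    deriv (deriv fun v => f v * χ v) z = deriv (deriv f) z * χ z := by
  have hderiv : deriv (fun v => f v * χ v) =ᶠ[𝓝 z] fun w => deriv f w * χ w + c / f w := by
    filter_upwards [hf, hχ] with w hfw hχw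
    exact deriv_mul_of_hasDerivAt_div_sq hfw hχw
  rw [hderiv.deriv_eq]
  refine ((hf'.hasDerivAt.mul hχ.self_of_nhds).add
    ((hasDerivAt_const z c).div hf.self_of_nhds.hasDerivAt hf0)).deriv.trans ?_
  field_simp
  ring

end ReductionOfOrder

section WeierstrassChi

variable {P Z : ℂ → ℂ} {g2 g3 z : ℂ}

noncomputable def weierstrassChi (P Z : ℂ → ℂ) (g2 g3 : ℂ) (z : ℂ) : ℂ :=
  18 * P z ^ 2 * deriv P z + (1 / 2) * g2 * deriv P z + 2 * g2 ^ 2 * z - 36 * g3 * Z z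

theorem hasDerivAt_weierstrassChi (hP : DifferentiableAt ℂ P z)
    (hP' : DifferentiableAt ℂ (deriv P) z) (hZ : HasDerivAt Z (-(P z)) z)
    (hode : deriv P z ^ 2 = 4 * P z ^ 3 - g2 * P z - g3)
    (hPP : deriv (deriv P) z = 6 * P z ^ 2 - g2 / 2) :
    HasDerivAt (weierstrassChi P Z g2 g3) (7 * deriv (deriv P) z ^ 2) z := by
  have h := ((((hP.hasDerivAt.pow 2).const_mul 18).mul hP'.hasDerivAt).add
    (hP'.hasDerivAt.const_mul ((1 / 2) * g2))).add ((hasDerivAt_id z).const_mul (2 * g2 ^ 2))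
    |>.sub (hZ.const_mul (36 * g3))
  refine h.congr_deriv ?_
  simp only [Pi.pow_apply]
  linear_combination (36 * P z : ℂ) * hode
    - (7 * deriv (deriv P) z + 24 * P z ^ 2 - 4 * g2 : ℂ) * hPP

theorem weierstrassChi_add_sub {w η : ℂ} (hP : P (z + w) = P z)
    (hP' : deriv P (z + w) = deriv P z) (hZ : Z (z + w) - Z z = η) :
    weierstrassChi P Z g2 g3 (z + w) - weierstrassChi P Z g2 g3 z =
      2 * (g2 ^ 2 * w - 18 * η * g3) := by
  simp only [weierstrassChi, hP, hP']
  linear_combination (-36 * g3) * hZ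

end WeierstrassChi

theorem weierstrass_second_solution_general
    (S : Set ℂ) (hS : IsOpen S)
    (P Z : ℂ → ℂ) (g2 g3 e1 e2 τ : ℂ)
    (hP : ∀ z ∈ S, ContDiffAt ℂ ⊤ P z)
    (hZ : ∀ z ∈ S, HasDerivAt Z (-(P z)) z)
    (hode : ∀ z ∈ S, (deriv P z) ^ 2 = 4 * P z ^ 3 - g2 * P z - g3)
    (hPP : ∀ z ∈ S, deriv (deriv P) z = 6 * P z ^ 2 - g2 / 2)
    (hper1 : ∀ z, z ∈ S → z + 1 ∈ S → P (z + 1) = P z ∧ deriv P (z + 1) = deriv P z)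
    (hperτ : ∀ z, z ∈ S → z + τ ∈ S → P (z + τ) = P z ∧ deriv P (z + τ) = deriv P z)
    (hq1 : ∀ z, z ∈ S → z + 1 ∈ S → Z (z + 1) - Z z = e1)
    (hq2 : ∀ z, z ∈ S → z + τ ∈ S → Z (z + τ) - Z z = e2) :
    let χ : ℂ → ℂ := fun z =>
      18 * P z ^ 2 * deriv P z + (1 / 2) * g2 * deriv P z + 2 * g2 ^ 2 * z - 36 * g3 * Z z
    let y1 : ℂ → ℂ := fun z => (deriv (deriv P) z)⁻¹
    let y2 : ℂ → ℂ := fun z => y1 z * χ z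
    (∀ z ∈ S, deriv χ z = 7 * (deriv (deriv P) z) ^ 2) ∧
    (∀ z, z ∈ S → z + 1 ∈ S → χ (z + 1) - χ z = 2 * (g2 ^ 2 - 18 * e1 * g3)) ∧
    (∀ z, z ∈ S → z + τ ∈ S → χ (z + τ) - χ z = 2 * (g2 ^ 2 * τ - 18 * e2 * g3)) ∧
    (∀ z ∈ S, deriv (deriv P) z ≠ 0 →
      deriv (deriv y2) z = (deriv (deriv y1) z / y1 z) * y2 z) ∧
    (∀ z ∈ S, deriv (deriv P) z ≠ 0 →
      y1 z * deriv y2 z - deriv y1 z * y2 z ≠ 0) := by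
  intro χ y1 y2
  have hPa : AnalyticOnNhd ℂ P S := (analyticOnNhd_iff_differentiableOn hS).mpr
    fun z hz => ((hP z hz).differentiableAt (by simp)).differentiableWithinAt
  have hχ (z) (hz : z ∈ S) : HasDerivAt χ (7 / y1 z ^ 2) z := by
    rw [inv_pow, div_inv_eq_mul]
    exact hasDerivAt_weierstrassChi (hPa z hz).differentiableAt
      (hPa.deriv z hz).differentiableAt (hZ z hz) (hode z hz) (hPP z hz)
  have hy1 (z) (hz : z ∈ S) (hQ : deriv (deriv P) z ≠ 0) : AnalyticAt ℂ y1 z :=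
    (hPa.deriv.deriv z hz).inv hQ
  refine ⟨fun z hz => ?_, fun z hz hz1 => ?_, fun z hz hzτ => ?_, fun z hz hQ => ?_,
    fun z hz hQ => ?_⟩
  · rw [(hχ z hz).deriv, inv_pow, div_inv_eq_mul]
  · have h := weierstrassChi_add_sub (g2 := g2) (g3 := g3) (hper1 z hz hz1).1 (hper1 z hz hz1).2
      (hq1 z hz hz1)
    rwa [mul_one] at h
  · exact weierstrassChi_add_sub (hperτ z hz hzτ).1 (hperτ z hz hzτ).2 (hq2 z hz hzτ)
  · have hy1z : y1 z ≠ 0 := inv_ne_zero hQ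
    rw [deriv_deriv_mul_of_hasDerivAt_div_sq
      ((hy1 z hz hQ).eventually_analyticAt.mono fun _ h => h.differentiableAt)
      (hy1 z hz hQ).deriv.differentiableAt (eventually_of_mem (hS.mem_nhds hz) hχ) hy1z]
    field_simp
    ring
  · rw [wronskian_mul_of_hasDerivAt_div_sq (hy1 z hz hQ).differentiableAt (hχ z hz)
      (inv_ne_zero hQ)]
    norm_num

theorem weierstrass_second_solution
    (S : Set ℂ) (hS : IsOpen S)
    (P Z : ℂ → ℂ) (g2 g3 e1 e2 τ : ℂ)
    (hP : ∀ z ∈ S, ContDiffAt ℂ ⊤ P z)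
    (hZ : ∀ z ∈ S, HasDerivAt Z (-(P z)) z)
    (hode : ∀ z ∈ S, (deriv P z) ^ 2 = 4 * P z ^ 3 - g2 * P z - g3)
    (hPP : ∀ z ∈ S, deriv (deriv P) z = 6 * P z ^ 2 - g2 / 2)
    (hper1 : ∀ z, z ∈ S → z + 1 ∈ S → P (z + 1) = P z ∧ deriv P (z + 1) = deriv P z)
    (hperτ : ∀ z, z ∈ S → z + τ ∈ S → P (z + τ) = P z ∧ deriv P (z + τ) = deriv P z)
    (hq1 : ∀ z, z ∈ S → z + 1 ∈ S → Z (z + 1) - Z z = e1)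
    (hq2 : ∀ z, z ∈ S → z + τ ∈ S → Z (z + τ) - Z z = e2)
    (hg2 : g2 ≠ 0) :
    let χ : ℂ → ℂ := fun z =>
      18 * P z ^ 2 * deriv P z + (1 / 2) * g2 * deriv P z + 2 * g2 ^ 2 * z - 36 * g3 * Z z
    let y1 : ℂ → ℂ := fun z => (deriv (deriv P) z)⁻¹
    let y2 : ℂ → ℂ := fun z => y1 z * χ z
    (∀ z ∈ S, deriv χ z = 7 * (deriv (deriv P) z) ^ 2) ∧
    (∀ z, z ∈ S → z + 1 ∈ S → χ (z + 1) - χ z = 2 * (g2 ^ 2 - 18 * e1 * g3)) ∧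
    (∀ z, z ∈ S → z + τ ∈ S → χ (z + τ) - χ z = 2 * (g2 ^ 2 * τ - 18 * e2 * g3)) ∧
    (∀ z ∈ S, deriv (deriv P) z ≠ 0 →
      deriv (deriv y2) z = (deriv (deriv y1) z / y1 z) * y2 z) ∧
    (∀ z ∈ S, deriv (deriv P) z ≠ 0 →
      y1 z * deriv y2 z - deriv y1 z * y2 z ≠ 0) :=
  weierstrass_second_solution_general S hS P Z g2 g3 e1 e2 τ hP hZ hode hPP hper1 hperτ hq1 hq2
end
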